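/- arXiv:1911.09088 — 8 statements merged into one kernel-verified Lean document; each statement's English description precedes it below -/
import Mathlib

section
/- If X is a scattered topological space, then on the homeomorphism group Homeo(X) the topology of pointwise convergence coincides with the topology of pointwise convergence with respect to the discrete topology on X (i.e., a net of homeomorphisms converges pointwise to a homeomorphism g iff for every x it is eventually equal to g(x)). -/
/-- A topological space is *scattered* if every nonempty subset has a point
isolated in it (for the subspace topology). -/
def Scattered (X : Type*) [TopologicalSpace X] : Prop :=
  ∀ A : Set X, A.Nonempty → ∃ x ∈ A, ∃ U : Set X, IsOpen U ∧ U ∩ A = {x}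

/-!
Every orbit of a group acting by homeomorphisms on a scattered space is discrete: some point of
the orbit is isolated in it, and the action moves that point to any other point of the orbit.
If the open set `U` meets the orbit of `y` only in `y` and some `g₀` maps `x` to `y`, then
`g x = y` is equivalent to the pointwise-open condition `g x ∈ U`; hence every fibre of the
evaluation at `x` is open in the pointwise topology.
-/

open Set MulAction TopologicalSpace Topology Pointwise

namespace Homeomorph

variable {X : Type*} [TopologicalSpace X]

instance applyMulAction : MulAction (X ≃ₜ X) X where
  smul f x := f x
  one_smul _ := rfl
  mul_smul _ _ _ := rfl

instance : ContinuousConstSMul (X ≃ₜ X) X := ⟨fun f => f.continuous⟩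

end Homeomorph

section Scattered

variable {G X : Type*} [Group G] [MulAction G X] [TopologicalSpace X] [ContinuousConstSMul G X]

theorem Scattered.exists_isOpen_inter_orbit_eq_singleton (hX : Scattered X) (y : X) :
    ∃ U : Set X, IsOpen U ∧ U ∩ orbit G y = {y} := by
  obtain ⟨_, ⟨k, rfl⟩, U, hU, hUk⟩ := hX (orbit G y) (nonempty_orbit y)
  refine ⟨k⁻¹ • U, hU.smul k⁻¹, ?_⟩
  calc k⁻¹ • U ∩ orbit G y = k⁻¹ • (U ∩ orbit G y) := by rw [smul_set_inter, smul_orbit]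
    _ = {y} := by rw [hUk, smul_set_singleton, inv_smul_smul]

theorem Scattered.isOpen_setOf_smul_eq (hX : Scattered X) (x y : X) :
    IsOpen[induced (fun g : G => (g • · : X → X)) Pi.topologicalSpace] {g : G | g • x = y} := by
  let _ : TopologicalSpace G := induced (fun g : G => (g • · : X → X)) Pi.topologicalSpace
  obtain ⟨U, hU, hUy⟩ := hX.exists_isOpen_inter_orbit_eq_singleton (G := G) y
  refine isOpen_iff_forall_mem_open.2 fun g₀ (hg₀ : g₀ • x = y) => ⟨{g | g • x ∈ U}, ?_, ?_, ?_⟩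
  · intro g (hg : g • x ∈ U)
    have hg_orbit : g • x ∈ orbit G y := hg₀ ▸ smul_mem_orbit_smul g g₀ x
    have : g • x ∈ U ∩ orbit G y := ⟨hg, hg_orbit⟩
    rwa [hUy] at this
  · exact isOpen_induced (hU.preimage (continuous_apply x))
  · show g₀ • x ∈ U
    exact hg₀ ▸ (hUy.symm.subset rfl).1

theorem Scattered.induced_smul_pi_eq_induced_smul_pi_bot (hX : Scattered X) :
    induced (fun g : G => (g • · : X → X)) Pi.topologicalSpace =
      induced (fun g : G => (g • · : X → X)) (@Pi.topologicalSpace X (fun _ => X) fun _ => ⊥) := by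
  refine le_antisymm ?_ (induced_mono (iInf_mono fun _ => induced_mono bot_le))
  rw [← continuous_iff_le_induced]
  refine continuous_iInf_rng.2 fun x => continuous_induced_rng.2 ?_
  exact (@continuous_discrete_rng X G (induced (fun g : G => (g • · : X → X)) Pi.topologicalSpace) ⊥
    (discreteTopology_bot X) _).2 (hX.isOpen_setOf_smul_eq x)

end Scattered

/-- On the homeomorphism group of a scattered space, the topology of pointwise
convergence coincides with the topology of pointwise convergence for the
discrete topology on `X`. -/
theorem pointwise_eq_discretePointwise_of_scattered
    (X : Type*) [t : TopologicalSpace X] (hX : Scattered X) :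
    TopologicalSpace.induced (fun g : X ≃ₜ X => (g : X → X))
        (@Pi.topologicalSpace X (fun _ => X) (fun _ => t)) =
      TopologicalSpace.induced (fun g : X ≃ₜ X => (g : X → X))
        (@Pi.topologicalSpace X (fun _ => X) (fun _ => ⊥)) :=
  hX.induced_smul_pi_eq_induced_smul_pi_bot (G := X ≃ₜ X)
end

section
/- If X is a scattered Hausdorff space, then Homeo(X), endowed with the topology of pointwise convergence, is a topological group admitting a neighbourhood basis of the identity consisting of open subgroups (namely, the pointwise stabilizers of finite subsets of X). -/
noncomputable section

/-- The group structure on the self-homeomorphism group of a topological space. -/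
instance {X : Type*} [TopologicalSpace X] : Group (X ≃ₜ X) where
  mul g h := h.trans g
  one := Homeomorph.refl X
  inv := Homeomorph.symm
  mul_assoc _ _ _ := Homeomorph.ext fun _ => rfl
  one_mul _ := Homeomorph.ext fun _ => rfl
  mul_one _ := Homeomorph.ext fun _ => rfl
  inv_mul_cancel g := Homeomorph.ext fun x => g.symm_apply_apply x

/-!
In a scattered space the orbit of a point `x` under `Homeo(X)` has an isolated point, and since
`Homeo(X)` acts transitively on the orbit by homeomorphisms, every point of the orbit is isolated
in it. So for the pointwise topology, `g x` close to `g₀ x` forces `g x = g₀ x`: the neighbourhoods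
of `g₀` are generated by the sets `{g | g x = g₀ x}`, every evaluation map is locally constant,
and so are the coordinates of multiplication and inversion.
-/

open Filter Topology

section

variable {X : Type*} [TopologicalSpace X]

namespace Homeomorph

abbrev pointwiseTopology : TopologicalSpace (X ≃ₜ X) :=
  TopologicalSpace.induced (fun g : X ≃ₜ X => (g : X → X)) Pi.topologicalSpace

def fixingSubgroup (F : Set X) : Subgroup (X ≃ₜ X) where
  carrier := {g | ∀ x ∈ F, g x = x}
  mul_mem' {a b} ha hb x hx := by
    change a (b x) = x
    rw [hb x hx, ha x hx]
  one_mem' _ _ := rfl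
  inv_mem' {a} ha x hx := by
    change a.symm x = x
    rw [a.symm_apply_eq, ha x hx]

end Homeomorph

namespace Scattered

theorem exists_mem_nhds_forall_apply_mem_eq (hX : Scattered X) (x : X) (g₀ : X ≃ₜ X) :
    ∃ V ∈ 𝓝 (g₀ x), ∀ g : X ≃ₜ X, g x ∈ V → g x = g₀ x := by
  obtain ⟨_, ⟨g₁, rfl⟩, U, hU, hU_orbit⟩ :=
    hX (Set.range fun g : X ≃ₜ X => g x) ⟨x, 1, rfl⟩
  -- `h` carries `g₀ x` to the isolated point `g₁ x` of the orbit.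
  set h : X ≃ₜ X := g₁ * g₀⁻¹
  have h_g₀ : h (g₀ x) = g₁ x := by simp [h]
  have hg₁U : g₁ x ∈ U := (hU_orbit.ge (Set.mem_singleton _)).1
  refine ⟨h ⁻¹' U, (hU.preimage h.continuous).mem_nhds (by rwa [Set.mem_preimage, h_g₀]),
    fun g hg => ?_⟩
  have : h (g x) ∈ U ∩ Set.range fun g : X ≃ₜ X => g x := ⟨hg, h * g, rfl⟩
  rw [hU_orbit, Set.mem_singleton_iff] at this
  exact h.injective (this.trans h_g₀.symm)

theorem comap_apply_nhds (hX : Scattered X) (x : X) (g₀ : X ≃ₜ X) :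
    comap (fun g : X ≃ₜ X => g x) (𝓝 (g₀ x)) = 𝓟 {g | g x = g₀ x} := by
  obtain ⟨V, hV, hV_eq⟩ := hX.exists_mem_nhds_forall_apply_mem_eq x g₀
  refine le_antisymm (le_principal_iff.2 ⟨V, hV, hV_eq⟩) ?_
  rintro _ ⟨W, hW, hWs⟩ g (hg : g x = g₀ x)
  exact hWs (by simpa [hg] using mem_of_mem_nhds hW)

attribute [local instance] Homeomorph.pointwiseTopology

theorem nhds_homeomorph (hX : Scattered X) (g₀ : X ≃ₜ X) :
    𝓝 g₀ = ⨅ x, 𝓟 {g : X ≃ₜ X | g x = g₀ x} := by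
  simp only [nhds_induced, nhds_pi, Filter.pi, comap_iInf, comap_comap, ← hX.comap_apply_nhds]
  rfl

theorem eventually_homeomorph_apply_eq (hX : Scattered X) (g₀ : X ≃ₜ X) (x : X) :
    ∀ᶠ g in 𝓝 g₀, g x = g₀ x := by
  rw [hX.nhds_homeomorph]
  exact mem_iInf_of_mem x (mem_principal_self _)

theorem nhds_homeomorph_hasBasis (hX : Scattered X) (g₀ : X ≃ₜ X) :
    (𝓝 g₀).HasBasis (fun _ : Finset X => True) fun F => {g | ∀ x ∈ F, g x = g₀ x} := by
  rw [hX.nhds_homeomorph]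
  refine (hasBasis_iInf_principal_finite _).to_hasBasis
    (fun s hs => ⟨hs.toFinset, trivial, fun g hg => Set.mem_iInter₂.2 fun x hx =>
      hg x (hs.mem_toFinset.2 hx)⟩)
    (fun F _ => ⟨F, F.finite_toSet, fun g hg x hx => Set.mem_iInter₂.1 hg x hx⟩)

theorem continuous_homeomorph_iff {Y : Type*} [TopologicalSpace Y] {f : Y → X ≃ₜ X} :
    Continuous f ↔ ∀ x, Continuous fun y => f y x :=
  continuous_induced_rng.trans continuous_pi_iff

theorem isTopologicalGroup_homeomorph (hX : Scattered X) : IsTopologicalGroup (X ≃ₜ X) where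
  continuous_mul := continuous_homeomorph_iff.2 fun x =>
    IsLocallyConstant.continuous <| (IsLocallyConstant.iff_eventually_eq _).2 fun ⟨g₀, h₀⟩ =>
      ((hX.eventually_homeomorph_apply_eq g₀ (h₀ x)).prodMk_nhds
        (hX.eventually_homeomorph_apply_eq h₀ x)).mono fun _ ⟨hg, hh⟩ => by
          simp only [Homeomorph.mul_apply, hh, hg]
  continuous_inv := continuous_homeomorph_iff.2 fun x =>
    IsLocallyConstant.continuous <| (IsLocallyConstant.iff_eventually_eq _).2 fun g₀ =>
      (hX.eventually_homeomorph_apply_eq g₀ (g₀.symm x)).mono fun g hg => by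
        simp only [Homeomorph.inv_apply, Homeomorph.symm_apply_eq, hg, g₀.apply_symm_apply]

theorem isOpen_fixingSubgroup (hX : Scattered X) (F : Finset X) :
    IsOpen (Homeomorph.fixingSubgroup (F : Set X) : Set (X ≃ₜ X)) :=
  have := hX.isTopologicalGroup_homeomorph
  Subgroup.isOpen_of_mem_nhds _ ((hX.nhds_homeomorph_hasBasis 1).mem_of_mem trivial)

end Scattered

end

theorem homeoScattered_topologicalGroup_and_openSubgroupBasis_general
    (X : Type*) [TopologicalSpace X] (hX : Scattered X) :
    letI : TopologicalSpace (X ≃ₜ X) :=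
      TopologicalSpace.induced (fun g : X ≃ₜ X => (g : X → X)) Pi.topologicalSpace
    IsTopologicalGroup (X ≃ₜ X) ∧
      (nhds (1 : X ≃ₜ X)).HasBasis (fun _ : Finset X => True)
        (fun F => {g : X ≃ₜ X | ∀ x ∈ F, g x = x}) ∧
      ∀ F : Finset X, ∃ H : Subgroup (X ≃ₜ X),
        (H : Set (X ≃ₜ X)) = {g : X ≃ₜ X | ∀ x ∈ F, g x = x} ∧
        IsOpen (H : Set (X ≃ₜ X)) := by
  exact ⟨hX.isTopologicalGroup_homeomorph, hX.nhds_homeomorph_hasBasis 1,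
    fun F => ⟨Homeomorph.fixingSubgroup F, rfl, hX.isOpen_fixingSubgroup F⟩⟩

/-- If `X` is a scattered Hausdorff space, then `Homeo(X)` with the topology of
pointwise convergence is a topological group, and the pointwise stabilizers of
finite subsets form a neighbourhood basis of the identity made of open subgroups. -/
theorem homeoScattered_topologicalGroup_and_openSubgroupBasis
    (X : Type*) [TopologicalSpace X] [T2Space X] (hX : Scattered X) :
    letI : TopologicalSpace (X ≃ₜ X) :=
      TopologicalSpace.induced (fun g : X ≃ₜ X => (g : X → X)) Pi.topologicalSpace
    IsTopologicalGroup (X ≃ₜ X) ∧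
      (nhds (1 : X ≃ₜ X)).HasBasis (fun _ : Finset X => True)
        (fun F => {g : X ≃ₜ X | ∀ x ∈ F, g x = x}) ∧
      ∀ F : Finset X, ∃ H : Subgroup (X ≃ₜ X),
        (H : Set (X ≃ₜ X)) = {g : X ≃ₜ X | ∀ x ∈ F, g x = x} ∧
        IsOpen (H : Set (X ≃ₜ X)) :=
  homeoScattered_topologicalGroup_and_openSubgroupBasis_general X hX
end
end

section
/- Let g : ω₁ → ω₁ be a continuous map (for the order topology) all of whose fibers are countable. Then the set of fixed points of g is closed and unbounded (cofinal) in ω₁. -/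
noncomputable section
open Ordinal Set Topology

/-- The first uncountable ordinal `ω₁`, as a type, endowed with the order topology. -/
def Omega1 : Type 1 := Set.Iio (Ordinal.omega 1)

instance : LinearOrder Omega1 := inferInstanceAs (LinearOrder (Set.Iio (Ordinal.omega 1)))
instance : TopologicalSpace Omega1 := Preorder.topology Omega1
instance : OrderTopology Omega1 := ⟨rfl⟩

/-- The underlying ordinal of a point of `ω₁`. -/
def Omega1.toOrdinal (x : Omega1) : Ordinal := Subtype.val x

theorem Omega1.toOrdinal_lt (x : Omega1) : x.toOrdinal < Ordinal.omega 1 := Subtype.prop x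

/-- Build a point of `ω₁` from a countable ordinal. -/
def Omega1.mk (o : Ordinal) (h : o < Ordinal.omega 1) : Omega1 := Subtype.mk o h

/-- The topology of pointwise convergence on the homeomorphism group of `ω₁`. -/
instance : TopologicalSpace (Omega1 ≃ₜ Omega1) :=
  TopologicalSpace.induced (fun g : Omega1 ≃ₜ Omega1 => (g : Omega1 → Omega1))
    Pi.topologicalSpace

/-! Countable fibres force `g x → ∞`: the preimage of `[0, y)` is a countable union of countable
fibres, hence bounded in `ω₁`. So, starting from `α`, one can choose `u₀ = α, u₁, u₂, …` with
`u (n+1)` above `g (u n)` and strictly above every `x` with `g x < u n`. The supremum `β` of this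
sequence is a fixed point: `g β ≤ β` by continuity, while `g β < u n` would give `β < u (n+1)`. -/

open Filter

theorem exists_fixedPoint_ge_of_tendsto_atTop {X : Type*} [LinearOrder X] [TopologicalSpace X]
    [OrderTopology X] (hlub : ∀ u : ℕ → X, ∃ b, IsLUB (range u) b) {g : X → X}
    (hg : Continuous g) (hg_top : Tendsto g atTop atTop) (α : X) :
    ∃ β, g β = β ∧ α ≤ β := by
  have : Nonempty X := ⟨α⟩
  have step : ∀ a, ∃ b, g a ≤ b ∧ ∀ x, g x < a → x < b := by
    intro a
    obtain ⟨i, hi⟩ := tendsto_atTop_atTop.1 hg_top a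
    exact ⟨max i (g a), le_max_right _ _,
      fun x hx => lt_max_of_lt_left (lt_of_not_ge fun h => (hi x h).not_gt hx)⟩
  choose next hg_le_next hlt_next using step
  set u : ℕ → X := fun n => next^[n] α
  have hu_succ (n : ℕ) : u (n + 1) = next (u n) := Function.iterate_succ_apply' next n α
  obtain ⟨β, hβ⟩ := hlub u
  have hu_le (n : ℕ) : u n ≤ β := hβ.1 (mem_range_self n)
  have hgβ_le : g β ≤ β := by
    have hsub : range u ⊆ g ⁻¹' Iic β := by
      rintro _ ⟨n, rfl⟩
      exact (hg_le_next (u n)).trans (hu_succ n ▸ hu_le (n + 1))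
    exact closure_minimal hsub (isClosed_Iic.preimage hg) (hβ.mem_closure (range_nonempty u))
  have hle_gβ : β ≤ g β := by
    refine hβ.2 ?_
    rintro _ ⟨n, rfl⟩
    by_contra! h
    exact (hlt_next (u n) β h).not_ge (hu_succ n ▸ hu_le (n + 1))
  exact ⟨β, le_antisymm hgβ_le hle_gβ, hu_le 0⟩

namespace Omega1

instance : Nonempty Omega1 := ⟨mk 0 (omega_pos 1)⟩

instance : NoMaxOrder Omega1 := (Cardinal.isSuccLimit_omega 1).isSuccPrelimit.noMaxOrder_Iio

theorem countable_Iio (a : Omega1) : (Iio a).Countable := by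
  have : (Iio a.toOrdinal).Countable := by
    rw [← Cardinal.le_aleph0_iff_set_countable, Cardinal.mk_Iio_ordinal, Cardinal.lift_le_aleph0,
      ← Cardinal.lt_aleph_one_iff, ← Cardinal.lt_omega_iff_card_lt]
    exact a.toOrdinal_lt
  exact this.preimage Subtype.val_injective

theorem exists_isLUB_of_countable {s : Set Omega1} (hs : s.Countable) : ∃ b, IsLUB s b := by
  have : Countable s := hs.to_subtype
  have hlt : ⨆ x : s, (x : Omega1).toOrdinal < ω₁ := iSup_lt_omega_one fun x => x.1.toOrdinal_lt
  exact ⟨mk _ hlt, fun x hx => Ordinal.le_iSup (fun x : s => (x : Omega1).toOrdinal) ⟨x, hx⟩,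
    fun b hb => Ordinal.iSup_le fun x => hb x.2⟩

theorem tendsto_atTop_of_countable_fibers {g : Omega1 → Omega1}
    (hfib : ∀ y, (g ⁻¹' {y}).Countable) : Tendsto g atTop atTop := by
  refine tendsto_atTop_atTop.2 fun y => ?_
  have hcount : (g ⁻¹' Iio y).Countable := by
    rw [← biUnion_preimage_singleton]
    exact (countable_Iio y).biUnion fun z _ => hfib z
  obtain ⟨c, hc⟩ := exists_isLUB_of_countable hcount
  obtain ⟨i, hi⟩ := exists_gt c
  exact ⟨i, fun x hx => le_of_not_gt fun h => ((hc.1 h).trans_lt hi).not_ge hx⟩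

end Omega1

/-- The fixed-point set of a continuous self-map of `ω₁` with countable fibers
is closed and unbounded. -/
theorem fixedPoints_closed_unbounded (g : Omega1 → Omega1) (hg : Continuous g)
    (hfib : ∀ y : Omega1, (g ⁻¹' {y}).Countable) :
    IsClosed {x : Omega1 | g x = x} ∧
      ∀ α : Omega1, ∃ β : Omega1, g β = β ∧ α ≤ β :=
  ⟨isClosed_eq hg continuous_id,
    exists_fixedPoint_ge_of_tendsto_atTop
      (fun u => Omega1.exists_isLUB_of_countable (countable_range u)) hg
      (Omega1.tendsto_atTop_of_countable_fibers hfib)⟩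
end
end

section
/- Let A be a set of homeomorphisms of ω₁ such that for every x ∈ ω₁ the orbit set {g(x) : g ∈ A} is countable. Then the set of common fixed points ⋂_{g ∈ A} Fix(g) is closed and unbounded in ω₁. -/
noncomputable section
open Ordinal Set Topology

/-!
Each orbit is countable, hence bounded by some `F x`. Closing under `F` and under
`x ↦ ω ^ (x + 1)` gives, above any `α`, a countable limit ordinal `β = ω ^ β` such that every
`g ∈ A` maps `Iio β` into itself; by continuity `g β ≤ β`. Conversely, the Cantor–Bendixson rank
of a point of `ω₁` is at most the point itself, the point `η + ω ^ ρ` has rank at least `ρ`, and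
homeomorphisms preserve rank; so `β = ω ^ β` has rank `β`, whence `β ≤ g β`.
-/

open Filter Order

section IteratedDerivedSet

variable {X Y : Type*} [TopologicalSpace X] [TopologicalSpace Y]

/-- The `o`-th Cantor–Bendixson derivative of `S`, i.e. the transfinite iterate of
`relDerivedSet` starting from `S`. -/
def iteratedDerivedSet (S : Set X) (o : Ordinal.{u}) : Set X :=
  {x | x ∈ S ∧ ∀ o' < o, AccPt x (𝓟 (iteratedDerivedSet S o'))}
termination_by o
decreasing_by assumption

theorem mem_iteratedDerivedSet {S : Set X} {o : Ordinal.{u}} {x : X} :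
    x ∈ iteratedDerivedSet S o ↔ x ∈ S ∧ ∀ o' < o, AccPt x (𝓟 (iteratedDerivedSet S o')) := by
  rw [iteratedDerivedSet]; rfl

theorem Continuous.mapsTo_iteratedDerivedSet {e : X → Y} (he : Continuous e)
    (he' : Function.Injective e) (S : Set X) (o : Ordinal.{u}) :
    MapsTo e (iteratedDerivedSet S o) (iteratedDerivedSet (e '' S) o) := by
  induction o using WellFoundedLT.induction with
  | _ o IH =>
    intro x hx
    rw [mem_iteratedDerivedSet] at hx ⊢
    refine ⟨mem_image_of_mem e hx.1, fun o' ho' => ?_⟩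
    have hacc := (hx.2 o' ho').map he.continuousAt he'
    rw [map_principal] at hacc
    exact hacc.mono (principal_mono.2 (IH o' ho').image_subset)

end IteratedDerivedSet

theorem Order.IsSuccLimit.apply_le_of_mapsTo_Iio {α : Type*} [LinearOrder α] [TopologicalSpace α]
    [OrderTopology α] {β : α} (hβ : IsSuccLimit β) {g : α → α} (hg : Continuous g)
    (h : MapsTo g (Iio β) (Iio β)) : g β ≤ β :=
  closure_minimal Iio_subset_Iic_self isClosed_Iic
    (map_mem_closure hg (hβ.isLUB_Iio.mem_closure (Iio_nonempty.2 hβ.1)) h)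

namespace Ordinal

theorem add_omega0_opow_lt_add_omega0_opow {m η σ ρ : Ordinal} (hm : m < η + ω ^ ρ)
    (hσρ : σ < ρ) : m + ω ^ σ < η + ω ^ ρ :=
  calc m + ω ^ σ ≤ η + (m - η) + ω ^ σ := add_le_add_left (le_add_sub m η) _
    _ = η + (m - η + ω ^ σ) := add_assoc _ _ _
    _ < η + ω ^ ρ := add_lt_add_right (isPrincipal_add_omega0_opow ρ
        (sub_lt_of_lt_add hm (opow_pos ρ omega0_pos))
        ((opow_lt_opow_iff_right one_lt_omega0).2 hσρ)) η

theorem omega0_opow_eq_self_of_forall_lt {β : Ordinal} (hβ : β ≠ 0)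
    (h : ∀ x < β, ω ^ succ x < β) : ω ^ β = β := by
  have hlim : IsSuccLimit β := isSuccLimit_iff.2
    ⟨hβ, isSuccPrelimit_of_succ_lt fun x hx => (right_le_opow _ one_lt_omega0).trans_lt (h x hx)⟩
  refine le_antisymm ((opow_le_of_isSuccLimit omega0_ne_zero hlim).2 fun x hx => ?_)
    (right_le_opow _ one_lt_omega0)
  exact (opow_le_opow_right omega0_pos (le_succ x)).trans (h x hx).le

end Ordinal

namespace Omega1

instance : WellFoundedLT Omega1 := inferInstanceAs (WellFoundedLT (Set.Iio (Ordinal.omega 1)))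

theorem succ_toOrdinal_lt (x : Omega1) : succ x.toOrdinal < ω₁ :=
  (Cardinal.isSuccLimit_omega 1).succ_lt x.toOrdinal_lt

instance inst_s4 : NoMaxOrder Omega1 := ⟨fun x => ⟨mk _ x.succ_toOrdinal_lt, lt_succ x.toOrdinal⟩⟩

instance : SuccOrder Omega1 := SuccOrder.ofLinearWellFoundedLT Omega1

theorem toOrdinal_injective : Function.Injective toOrdinal := Subtype.val_injective

theorem countable_Iic (x : Omega1) : (Iic x).Countable := by
  have : (Iio (succ x.toOrdinal)).Countable := by
    rw [← Cardinal.le_aleph0_iff_set_countable, Cardinal.mk_Iio_ordinal, Cardinal.lift_le_aleph0,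
      ← Cardinal.lt_aleph_one_iff, ← Cardinal.lt_omega_iff_card_lt]
    exact x.succ_toOrdinal_lt
  exact (this.preimage toOrdinal_injective).mono fun y (hy : y ≤ x) =>
    show y.toOrdinal < _ from lt_succ_iff.2 hy

theorem exists_forall_lt_of_countable {S : Set Omega1} (hS : S.Countable) :
    ∃ t : Omega1, ∀ y ∈ S, y < t := by
  have := hS.to_subtype
  refine ⟨mk (⨆ y : S, succ y.1.toOrdinal) (iSup_lt_omega_one fun y => y.1.succ_toOrdinal_lt),
    fun y hy => ?_⟩
  exact (lt_succ y.toOrdinal).trans_le (Ordinal.le_iSup (fun y : S => succ y.1.toOrdinal) ⟨y, hy⟩)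

theorem exists_gt_forall_lt_apply_lt (f : Omega1 → Omega1) (α : Omega1) :
    ∃ β, α < β ∧ ∀ x < β, f x < β := by
  choose T hT using fun x =>
    exists_forall_lt_of_countable ((countable_Iic x).union ((countable_Iic x).image f))
  let s (n : ℕ) : Omega1 := T^[n] α
  refine ⟨mk (⨆ n, (s n).toOrdinal) (iSup_lt_omega_one fun n => (s n).toOrdinal_lt), ?_,
    fun x hx => ?_⟩
  · exact (hT α α (Or.inl (mem_Iic.2 le_rfl))).trans_le
      (Ordinal.le_iSup (fun n => (s n).toOrdinal) 1)
  · obtain ⟨n, hn⟩ := Ordinal.lt_iSup_iff.1 hx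
    calc f x < T (s n) := hT _ _ (Or.inr (mem_image_of_mem f hn.le))
      _ = s (n + 1) := (Function.iterate_succ_apply' T n α).symm
      _ ≤ _ := Ordinal.le_iSup (fun n => (s n).toOrdinal) (n + 1)

theorem exists_gt_omega0_opow_eq_self_forall_lt (f : Omega1 → Omega1) (α : Omega1) :
    ∃ β, α < β ∧ ω ^ β.toOrdinal = β.toOrdinal ∧ ∀ x < β, f x < β := by
  let p (x : Omega1) : Omega1 :=
    mk (ω ^ succ x.toOrdinal) (isPrincipal_opow_omega 1 omega0_lt_omega_one x.succ_toOrdinal_lt)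
  obtain ⟨β, hαβ, hβ⟩ := exists_gt_forall_lt_apply_lt (fun x => max (f x) (p x)) α
  refine ⟨β, hαβ, Ordinal.omega0_opow_eq_self_of_forall_lt ?_ fun x hx => ?_,
    fun x hx => (le_max_left _ _).trans_lt (hβ x hx)⟩
  · exact (zero_le.trans_lt (show α.toOrdinal < _ from hαβ)).ne'
  · exact (le_max_right _ _).trans_lt (hβ (mk x (hx.trans β.toOrdinal_lt)) hx)

theorem le_toOrdinal_of_mem_iteratedDerivedSet {S : Set Omega1} {o : Ordinal} {x : Omega1}
    (hx : x ∈ iteratedDerivedSet S o) : o ≤ x.toOrdinal := by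
  induction o using WellFoundedLT.induction generalizing x with
  | _ o IH =>
    by_contra! hlt
    have hacc := (mem_iteratedDerivedSet.1 hx).2 _ hlt
    obtain ⟨b, hb⟩ := not_isMin_iff.1 hacc.not_isMin
    obtain ⟨y, hy, -, hyx⟩ := (SuccOrder.accPt_principal.1 hacc).2 b hb
    exact (IH _ hlt hy).not_gt hyx

theorem mem_iteratedDerivedSet_univ_of_eq_add {x : Omega1} {η ρ : Ordinal}
    (hx : x.toOrdinal = η + ω ^ ρ) : x ∈ iteratedDerivedSet univ ρ := by
  induction ρ using WellFoundedLT.induction generalizing x η with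
  | _ ρ IH =>
    have hη : η < x.toOrdinal := hx ▸ lt_add_of_pos_right η (opow_pos ρ omega0_pos)
    refine mem_iteratedDerivedSet.2 ⟨mem_univ x, fun σ hσ => SuccOrder.accPt_principal.2
      ⟨not_isMin_iff.2 ⟨mk η (hη.trans x.toOrdinal_lt), hη⟩, fun b hb => ?_⟩⟩
    have hlt : max b.toOrdinal η + ω ^ σ < x.toOrdinal :=
      hx ▸ Ordinal.add_omega0_opow_lt_add_omega0_opow (hx ▸ max_lt hb hη) hσ
    exact ⟨mk _ (hlt.trans x.toOrdinal_lt), IH σ hσ rfl,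
      show b.toOrdinal < _ from
        (le_max_left _ _).trans_lt (lt_add_of_pos_right _ (opow_pos σ omega0_pos)), hlt⟩

end Omega1

/-- If `A` is a weakly precompact set of homeomorphisms of `ω₁` (all orbits are
countable), then the set of common fixed points of `A` is closed and unbounded. -/
theorem commonFixedPoints_closed_unbounded (A : Set (Omega1 ≃ₜ Omega1))
    (hA : ∀ x : Omega1, {y : Omega1 | ∃ g ∈ A, g x = y}.Countable) :
    IsClosed (⋂ g ∈ A, {x : Omega1 | g x = x}) ∧
      ∀ α : Omega1, ∃ β ∈ ⋂ g ∈ A, {x : Omega1 | g x = x}, α ≤ β := by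
  refine ⟨isClosed_biInter fun g _ => isClosed_eq g.continuous continuous_id, fun α => ?_⟩
  choose F hF using fun x => Omega1.exists_forall_lt_of_countable (hA x)
  obtain ⟨β, hαβ, hβω, hβF⟩ := Omega1.exists_gt_omega0_opow_eq_self_forall_lt F α
  have hβ : β ∈ iteratedDerivedSet univ β.toOrdinal :=
    Omega1.mem_iteratedDerivedSet_univ_of_eq_add (η := 0) (by rw [zero_add, hβω])
  have hlim : IsSuccLimit β :=
    ((mem_iteratedDerivedSet.1 hβ).2 0 (hβω ▸ opow_pos _ omega0_pos)).isSuccLimit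
  refine ⟨β, mem_iInter₂.2 fun g hg => le_antisymm ?_ ?_, hαβ.le⟩
  · exact hlim.apply_le_of_mapsTo_Iio g.continuous fun x hx =>
      (hF x _ ⟨g, hg, rfl⟩).trans (hβF x hx)
  · have hgβ := g.continuous.mapsTo_iteratedDerivedSet g.injective univ _ hβ
    rw [image_univ_of_surjective g.surjective] at hgβ
    exact Omega1.le_toOrdinal_of_mem_iteratedDerivedSet hgβ
end
end

section
/- Any continuous group homomorphism from Homeo(ω₁) (with the topology of pointwise convergence) to a metrisable topological group is trivial. -/
noncomputable section
open Ordinal Set Topology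

/-!
Since `H` is first countable and T1, the kernel of `φ` contains a countable intersection of
identity neighbourhoods, hence the pointwise stabiliser of a countable, so bounded, set `Iic a`.
Given `g`, a closing-off argument gives a limit `b > a` such that `g` preserves `Iio b`, hence,
by continuity, the clopen set `Iic b`. Then `g` is the product of a homeomorphism fixing `Iic b`
pointwise and one supported in `Iic b`; the latter is conjugate, by a homeomorphism moving
`Iic a` beyond `b`, to one fixing `Iic a` pointwise. Both factors lie in the normal kernel.
-/

universe u

theorem closure_Iio_of_forall_exists_between {α : Type*} [LinearOrder α] [TopologicalSpace α]
    [OrderTopology α] {b : α} (h₀ : (Iio b).Nonempty) (h : ∀ l < b, ∃ y, l < y ∧ y < b) :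
    closure (Iio b) = Iic b := by
  refine (closure_minimal Iio_subset_Iic_self isClosed_Iic).antisymm fun y hy => ?_
  rcases hy.lt_or_eq with hy | rfl
  · exact subset_closure hy
  rw [mem_closure_iff_nhds]
  intro U hU
  obtain ⟨l, hl, hlU⟩ := exists_Ioc_subset_of_mem_nhds hU h₀
  obtain ⟨z, hlz, hzy⟩ := h l hl
  exact ⟨z, hlU ⟨hlz, hzy.le⟩, hzy⟩

theorem MonoidHom.exists_nhds_iInter_subset_ker {G H : Type*} [Group G] [TopologicalSpace G]
    [Group H] [TopologicalSpace H] [FirstCountableTopology H] [T1Space H] (φ : G →* H)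
    (hφ : ContinuousAt φ 1) : ∃ U : ℕ → Set G, (∀ n, U n ∈ 𝓝 1) ∧ ⋂ n, U n ⊆ φ.ker := by
  obtain ⟨V, hV⟩ := (𝓝 (1 : H)).exists_antitone_basis
  refine ⟨fun n => φ ⁻¹' V n, fun n => hφ.preimage_mem_nhds (by simpa using hV.mem n), ?_⟩
  intro k hk
  have : φ k ⤳ 1 := specializes_iff_pure.2 <| hV.toHasBasis.ge_iff.2 fun n _ =>
    Filter.mem_pure.2 (mem_iInter.1 hk n)
  exact this.eq

namespace Homeomorph

variable {X : Type*} [TopologicalSpace X]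

def piecewise (s : Set X) [DecidablePred (· ∈ s)] (hs : IsClopen s) (g : X ≃ₜ X)
    (hg : g ⁻¹' s = s) : X ≃ₜ X where
  toFun := s.piecewise g id
  invFun := s.piecewise g.symm id
  left_inv x := by
    by_cases hx : x ∈ s
    · have : g x ∈ s := (Set.ext_iff.1 hg x).2 hx
      simp [hx, this]
    · simp [hx]
  right_inv x := by
    by_cases hx : x ∈ s
    · have : g.symm x ∈ s := (Set.ext_iff.1 hg _).1 (by simpa using hx)
      simp [hx, this]
    · simp [hx]
  continuous_toFun := g.continuous.piecewise (by simp [hs.frontier_eq]) continuous_id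
  continuous_invFun := g.symm.continuous.piecewise (by simp [hs.frontier_eq]) continuous_id

theorem piecewise_apply_of_notMem {s : Set X} [DecidablePred (· ∈ s)] {hs : IsClopen s}
    {g : X ≃ₜ X} {hg : g ⁻¹' s = s} {x : X} (hx : x ∉ s) : piecewise s hs g hg x = x :=
  Set.piecewise_eq_of_notMem _ _ _ hx

theorem piecewise_mul_piecewise_compl {s : Set X} [DecidablePred (· ∈ s)] (hs : IsClopen s)
    (g : X ≃ₜ X) (hg : g ⁻¹' s = s) :
    piecewise s hs g hg * piecewise sᶜ hs.compl g (by rw [preimage_compl, hg]) = g := by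
  ext x
  change s.piecewise g id (sᶜ.piecewise g id x) = g x
  by_cases hx : x ∈ s
  · simp [hx]
  · have : g x ∉ s := fun h => hx ((Set.ext_iff.1 hg x).1 h)
    simp [hx, this]

theorem mem_of_preimage_isClopen_eq {N : Subgroup (X ≃ₜ X)} [hN : N.Normal] {A S : Set X}
    (hA : ∀ k : X ≃ₜ X, (∀ x ∈ A, k x = x) → k ∈ N) (hS : IsClopen S) (hAS : A ⊆ S)
    {σ : X ≃ₜ X} (hσ : MapsTo σ A Sᶜ) {g : X ≃ₜ X} (hg : g ⁻¹' S = S) : g ∈ N := by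
  classical
  rw [← piecewise_mul_piecewise_compl hS g hg]
  refine N.mul_mem ?_ (hA _ fun x hx => piecewise_apply_of_notMem (not_not.2 (hAS hx)))
  have hconj : σ⁻¹ * piecewise S hS g hg * σ ∈ N := hA _ fun x hx =>
    show σ.symm (piecewise S hS g hg (σ x)) = x by
      rw [piecewise_apply_of_notMem (hσ hx), σ.symm_apply_apply]
  convert hN.conj_mem _ hconj σ using 1
  group

end Homeomorph

namespace Ordinal

theorem continuous_sub_right (c : Ordinal.{u}) : Continuous (· - c) := by
  refine OrderTopology.continuous_iff.2 fun d => ⟨?_, ?_⟩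
  · have : (· - c) ⁻¹' Ioi d = Ioi (c + d) := by ext x; exact Ordinal.lt_sub
    rw [this]
    exact isOpen_Ioi
  · exact ((isLowerSet_Iio d).preimage fun x y h => sub_le.2 (h.trans (le_add_sub y c))).isOpen

theorem isClopen_Iic (a : Ordinal.{u}) : IsClopen (Iic a) :=
  ⟨isClosed_Iic, Order.Iio_succ a ▸ isOpen_Iio⟩

theorem countable_Iio_of_lt_omega_one {δ : Ordinal.{u}} (hδ : δ < ω_ 1) : (Iio δ).Countable := by
  rw [← Cardinal.le_aleph0_iff_set_countable, Cardinal.mk_Iio_ordinal, Cardinal.lift_le_aleph0,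
    ← Cardinal.lt_aleph_one_iff]
  exact Cardinal.lt_omega_iff_card_lt.1 hδ

theorem exists_mapsTo_Iio_of_mapsTo_Iio_omega_one {f : Ordinal.{u} → Ordinal.{u}}
    (hf : MapsTo f (Iio (ω_ 1)) (Iio (ω_ 1))) {a : Ordinal.{u}} (ha : a < ω_ 1) :
    ∃ b, a < b ∧ b < ω_ 1 ∧ MapsTo f (Iio b) (Iio b) := by
  set F : Ordinal.{u} → Ordinal.{u} := fun δ => ⨆ x : Iio δ, Order.succ (f x)
  have hω := Cardinal.isSuccLimit_omega 1
  have hF : ∀ δ < ω_ 1, F δ < ω_ 1 := fun δ hδ => by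
    have := (countable_Iio_of_lt_omega_one hδ).to_subtype
    exact iSup_lt_omega_one fun x => hω.succ_lt (hf (x.2.trans hδ))
  refine ⟨nfp F (Order.succ a), (Order.lt_succ a).trans_le (le_nfp _ _),
    nfp_lt_ord (by simp) hF (hω.succ_lt ha), fun x hx => ?_⟩
  obtain ⟨n, hn⟩ := lt_nfp_iff.1 hx
  calc f x < Order.succ (f x) := Order.lt_succ _
    _ ≤ F (F^[n] (Order.succ a)) := Ordinal.le_iSup (fun y : Iio _ => Order.succ (f y)) ⟨x, hn⟩
    _ ≤ nfp F (Order.succ a) := by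
      rw [← Function.iterate_succ_apply' F]
      exact iterate_le_nfp ..

def shiftSwap (a b x : Ordinal.{u}) : Ordinal.{u} :=
  if x ≤ a then b + 1 + x else if x ∈ Ioc b (b + 1 + a) then x - (b + 1) else x

variable {a b : Ordinal.{u}}

theorem shiftSwap_of_le {x : Ordinal.{u}} (hx : x ≤ a) : shiftSwap a b x = b + 1 + x := if_pos hx

theorem shiftSwap_involutive (hab : a ≤ b) : Function.Involutive (shiftSwap a b) := by
  intro x
  by_cases hxa : x ≤ a
  · have h₁ : ¬ b + 1 + x ≤ a := not_le.2 ((hab.trans_lt (lt_add_one b)).trans_le le_self_add)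
    have h₂ : b + 1 + x ∈ Ioc b (b + 1 + a) :=
      ⟨(lt_add_one b).trans_le le_self_add, add_le_add_right hxa _⟩
    simp [shiftSwap, hxa, h₁, h₂, add_sub_cancel]
  by_cases hx : x ∈ Ioc b (b + 1 + a)
  · have h₁ : x - (b + 1) ≤ a := sub_le.2 hx.2
    simp [shiftSwap, hxa, hx, h₁, Ordinal.add_sub_cancel_of_le (Order.add_one_le_of_lt hx.1)]
  · simp [shiftSwap, hxa, hx]

theorem continuous_shiftSwap : Continuous (shiftSwap a b) := by
  refine Continuous.if ?_ (isNormal_add_right _).continuous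
    (Continuous.if ?_ (continuous_sub_right _) continuous_id)
  · rw [show {x | x ≤ a} = Iic a from rfl, (isClopen_Iic a).frontier_eq]
    simp
  · have : IsClopen (Ioc b (b + 1 + a)) := by
      rw [← Ioi_inter_Iic, ← compl_Iic]
      exact (isClopen_Iic b).compl.inter (isClopen_Iic _)
    rw [show {x | x ∈ Ioc b (b + 1 + a)} = Ioc b (b + 1 + a) from rfl, this.frontier_eq]
    simp

theorem mapsTo_shiftSwap_Iio_omega_one (hb : b < ω_ 1) :
    MapsTo (shiftSwap a b) (Iio (ω_ 1)) (Iio (ω_ 1)) := by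
  have hω := Cardinal.isSuccLimit_omega 1
  intro x hx
  unfold shiftSwap
  split_ifs
  · exact isPrincipal_add_omega 1 (Order.succ_eq_add_one b ▸ hω.succ_lt hb) hx
  · exact (sub_le_self x _).trans_lt hx
  · exact hx

end Ordinal

namespace Omega1

theorem isEmbedding_toOrdinal : IsEmbedding toOrdinal := by
  refine StrictMono.isEmbedding_of_ordConnected (fun _ _ h => h) ?_
  change OrdConnected (range (Subtype.val : Iio (ω_ 1) → Ordinal))
  rw [Subtype.range_coe]
  exact ordConnected_Iio

theorem isClopen_Iic (b : Omega1) : IsClopen (Iic b) :=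
  (Ordinal.isClopen_Iic b.toOrdinal).preimage isEmbedding_toOrdinal.continuous

theorem exists_finite_fixing_subset_of_mem_nhds_one {U : Set (Omega1 ≃ₜ Omega1)} (hU : U ∈ 𝓝 1) :
    ∃ I : Set Omega1, I.Finite ∧ ∀ k : Omega1 ≃ₜ Omega1, (∀ x ∈ I, k x = x) → k ∈ U := by
  have hnhds : 𝓝 (1 : Omega1 ≃ₜ Omega1) =
      Filter.comap (fun g : Omega1 ≃ₜ Omega1 => (g : Omega1 → Omega1)) (𝓝 id) :=
    nhds_induced _ _
  rw [hnhds, Filter.mem_comap, nhds_pi] at hU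
  obtain ⟨S, hS, hSU⟩ := hU
  obtain ⟨I, hI, t, ht, htS⟩ := Filter.mem_pi.1 hS
  refine ⟨I, hI, fun k hk => hSU (htS fun x hx => ?_)⟩
  change k x ∈ t x
  rw [hk x hx]
  exact mem_of_mem_nhds (ht x)

theorem exists_countable_fixing_subset_ker {H : Type*} [Group H] [TopologicalSpace H]
    [FirstCountableTopology H] [T1Space H] (φ : (Omega1 ≃ₜ Omega1) →* H) (hφ : ContinuousAt φ 1) :
    ∃ C : Set Omega1, C.Countable ∧ ∀ k : Omega1 ≃ₜ Omega1, (∀ x ∈ C, k x = x) → k ∈ φ.ker := by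
  obtain ⟨U, hU, hUker⟩ := φ.exists_nhds_iInter_subset_ker hφ
  choose I hI hIU using fun n => exists_finite_fixing_subset_of_mem_nhds_one (hU n)
  refine ⟨⋃ n, I n, countable_iUnion fun n => (hI n).countable, fun k hk => hUker ?_⟩
  exact mem_iInter.2 fun n => hIU n k fun x hx => hk x (mem_iUnion_of_mem n hx)

theorem bddAbove_of_countable {C : Set Omega1} (hC : C.Countable) : BddAbove C := by
  have := hC.to_subtype
  refine ⟨mk (⨆ x : C, x.1.toOrdinal) (Ordinal.iSup_lt_omega_one fun x => x.1.toOrdinal_lt),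
    fun x hx => ?_⟩
  exact le_ciSup (f := fun y : C => y.1.toOrdinal)
    ⟨ω_ 1, forall_mem_range.2 fun y => (toOrdinal_lt _).le⟩ ⟨x, hx⟩

theorem exists_gt_mapsTo_Iio (f : Omega1 → Omega1) (a : Omega1) :
    ∃ b, a < b ∧ MapsTo f (Iio b) (Iio b) := by
  classical
  let F : Ordinal → Ordinal := fun o => if h : o < ω_ 1 then (f (mk o h)).toOrdinal else 0
  obtain ⟨b, hab, hb, hF⟩ := Ordinal.exists_mapsTo_Iio_of_mapsTo_Iio_omega_one (f := F)
    (fun o (ho : o < ω_ 1) => by simpa [F, ho] using toOrdinal_lt _) a.toOrdinal_lt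
  refine ⟨mk b hb, hab, fun x (hx : x.toOrdinal < b) => ?_⟩
  have hFx : F x.toOrdinal = (f x).toOrdinal := dif_pos x.toOrdinal_lt
  change (f x).toOrdinal < b
  exact hFx ▸ hF hx

theorem exists_gt_preimage_Iic_eq (g : Omega1 ≃ₜ Omega1) (a : Omega1) :
    ∃ b, a < b ∧ g ⁻¹' Iic b = Iic b := by
  let succ : Omega1 → Omega1 := fun x =>
    mk (Order.succ x.toOrdinal) ((Cardinal.isSuccLimit_omega 1).succ_lt x.toOrdinal_lt)
  -- Closing off under `succ` as well makes `b` a limit, so that `Iic b = closure (Iio b)`.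
  obtain ⟨b, hab, hb⟩ := exists_gt_mapsTo_Iio (fun x => max (max (g x) (g.symm x)) (succ x)) a
  have hb' : ∀ x < b, g x < b ∧ g.symm x < b ∧ succ x < b := fun x hx => by
    simpa [max_lt_iff, and_assoc] using hb hx
  have hIio : g ⁻¹' Iio b = Iio b := by
    ext x
    refine ⟨fun hx => ?_, fun hx => (hb' x hx).1⟩
    simpa using (hb' (g x) hx).2.1
  have hcl : closure (Iio b) = Iic b := closure_Iio_of_forall_exists_between ⟨a, hab⟩ fun l hl =>
    ⟨succ l, Order.lt_succ (α := Ordinal) _, (hb' l hl).2.2⟩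
  refine ⟨b, hab, ?_⟩
  rw [← hcl, g.preimage_closure, hIio]

theorem exists_homeomorph_mapsTo_Iic_compl {a b : Omega1} (hab : a ≤ b) :
    ∃ σ : Omega1 ≃ₜ Omega1, MapsTo σ (Iic a) (Iic b)ᶜ := by
  let s : Omega1 → Omega1 := fun x => mk (Ordinal.shiftSwap a.toOrdinal b.toOrdinal x.toOrdinal)
    (Ordinal.mapsTo_shiftSwap_Iio_omega_one b.toOrdinal_lt x.toOrdinal_lt)
  have hs : Function.Involutive s := fun x => Subtype.ext (Ordinal.shiftSwap_involutive hab _)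
  have hc : Continuous s := isEmbedding_toOrdinal.continuous_iff.2
    (Ordinal.continuous_shiftSwap.comp isEmbedding_toOrdinal.continuous)
  refine ⟨⟨hs.toPerm s, hc, hc⟩, fun x (hx : x ≤ a) => ?_⟩
  change ¬ Ordinal.shiftSwap a.toOrdinal b.toOrdinal x.toOrdinal ≤ b.toOrdinal
  rw [not_le, Ordinal.shiftSwap_of_le (show x.toOrdinal ≤ a.toOrdinal from hx)]
  exact (lt_add_one _).trans_le le_self_add

end Omega1

theorem continuous_hom_to_metrizable_trivial_general {H : Type*} [Group H]
    [TopologicalSpace H] [TopologicalSpace.MetrizableSpace H]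
    (φ : (Omega1 ≃ₜ Omega1) →* H) (hφ : Continuous φ) :
    ∀ g : Omega1 ≃ₜ Omega1, φ g = 1 := by
  intro g
  obtain ⟨C, hC, hCker⟩ := Omega1.exists_countable_fixing_subset_ker φ hφ.continuousAt
  obtain ⟨a, ha⟩ := Omega1.bddAbove_of_countable hC
  obtain ⟨b, hab, hgb⟩ := Omega1.exists_gt_preimage_Iic_eq g a
  obtain ⟨σ, hσ⟩ := Omega1.exists_homeomorph_mapsTo_Iic_compl hab.le
  exact Homeomorph.mem_of_preimage_isClopen_eq (N := φ.ker)
    (fun k hk => hCker k fun x hx => hk x (ha hx)) (Omega1.isClopen_Iic b)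
    (Iic_subset_Iic.2 hab.le) hσ hgb

/-- Any continuous homomorphism from `Homeo(ω₁)` to a metrisable topological
group is trivial. -/
theorem continuous_hom_to_metrizable_trivial {H : Type*} [Group H]
    [TopologicalSpace H] [IsTopologicalGroup H] [TopologicalSpace.MetrizableSpace H]
    (φ : (Omega1 ≃ₜ Omega1) →* H) (hφ : Continuous φ) :
    ∀ g : Omega1 ≃ₜ Omega1, φ g = 1 :=
  continuous_hom_to_metrizable_trivial_general φ hφ
end
end

section
/- The topological group Homeo(ω₁) is not a Baire space: the open sets T_n = ⋃_{n ≤ k < ω} Fix({k}) (for n a positive integer) are each dense, but their intersection is contained in the proper closed subgroup of homeomorphisms fixing ω, hence is not dense. -/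
noncomputable section
open Ordinal Set Topology

/-- The natural number `n`, viewed as a point of `ω₁`. -/
def natElt (n : ℕ) : Omega1 :=
  Omega1.mk n ((Ordinal.nat_lt_omega0 n).trans Ordinal.omega0_lt_omega_one)

/-- The first infinite ordinal `ω`, viewed as a point of `ω₁`. -/
def omegaElt : Omega1 := Omega1.mk Ordinal.omega0 Ordinal.omega0_lt_omega_one

/-- The open set `T n = ⋃_{n ≤ k < ω} Fix({k})` in `Homeo(ω₁)`. -/
def T (n : ℕ) : Set (Omega1 ≃ₜ Omega1) :=
  ⋃ k ∈ {k : ℕ | n ≤ k}, {g : Omega1 ≃ₜ Omega1 | g (natElt k) = natElt k}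

/-!
Evaluation at a point is continuous and the naturals are isolated in `ω₁`, so each `T n` is
open. It is dense because a homeomorphism `g` can be corrected, off any finite set, to fix a
natural `k ≥ n`: compose it with the transposition of the isolated points `k` and `g⁻¹ k`.
A homeomorphism fixing infinitely many naturals fixes their limit `ω`, but the homeomorphism
exchanging the clopen blocks `[0, ω]` and `[ω + 1, ω + 1 + ω]` moves `ω`; so `⋂ T n` lies in a
proper closed set and is not dense.
-/

namespace Homeomorph

variable {X : Type*} [TopologicalSpace X] {A B : Set X}

open scoped Classical in
def clopenSwapFun (e : A ≃ₜ B) (x : X) : X :=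
  if hA : x ∈ A then e ⟨x, hA⟩ else if hB : x ∈ B then e.symm ⟨x, hB⟩ else x

section clopenSwapFun

variable {e : A ≃ₜ B} {x : X}

theorem clopenSwapFun_of_mem_left (hx : x ∈ A) : clopenSwapFun e x = e ⟨x, hx⟩ := by
  rw [clopenSwapFun, dif_pos hx]

theorem clopenSwapFun_of_mem_right (hAB : Disjoint A B) (hx : x ∈ B) :
    clopenSwapFun e x = e.symm ⟨x, hx⟩ := by
  rw [clopenSwapFun, dif_neg (hAB.notMem_of_mem_right hx), dif_pos hx]

theorem clopenSwapFun_of_notMem (hA : x ∉ A) (hB : x ∉ B) : clopenSwapFun e x = x := by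
  rw [clopenSwapFun, dif_neg hA, dif_neg hB]

theorem clopenSwapFun_involutive (hAB : Disjoint A B) :
    Function.Involutive (clopenSwapFun e) := by
  intro x
  by_cases hA : x ∈ A
  · rw [clopenSwapFun_of_mem_left hA, clopenSwapFun_of_mem_right hAB (e _).2]
    simp
  by_cases hB : x ∈ B
  · rw [clopenSwapFun_of_mem_right hAB hB, clopenSwapFun_of_mem_left (e.symm _).2]
    simp
  · rw [clopenSwapFun_of_notMem hA hB, clopenSwapFun_of_notMem hA hB]

theorem continuous_clopenSwapFun (hA : IsClopen A) (hB : IsClopen B) (hAB : Disjoint A B) :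
    Continuous (clopenSwapFun e) := by
  rw [continuous_iff_continuousAt]
  intro x
  by_cases hxA : x ∈ A
  · refine ContinuousOn.continuousAt ?_ (hA.isOpen.mem_nhds hxA)
    rw [continuousOn_iff_continuous_domRestrict]
    convert continuous_subtype_val.comp e.continuous using 1
    ext ⟨y, hy⟩
    exact clopenSwapFun_of_mem_left hy
  by_cases hxB : x ∈ B
  · refine ContinuousOn.continuousAt ?_ (hB.isOpen.mem_nhds hxB)
    rw [continuousOn_iff_continuous_domRestrict]
    convert continuous_subtype_val.comp e.symm.continuous using 1
    ext ⟨y, hy⟩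
    exact clopenSwapFun_of_mem_right hAB hy
  · have hC : (A ∪ B)ᶜ ∈ 𝓝 x :=
      (hA.union hB).isClosed.isOpen_compl.mem_nhds (by simp [hxA, hxB])
    refine continuousAt_id.congr (Filter.eventuallyEq_of_mem hC fun y hy => ?_)
    simp only [mem_compl_iff, mem_union, not_or] at hy
    exact (clopenSwapFun_of_notMem hy.1 hy.2).symm

end clopenSwapFun

def clopenSwap (hA : IsClopen A) (hB : IsClopen B) (hAB : Disjoint A B) (e : A ≃ₜ B) :
    X ≃ₜ X where
  toEquiv := (clopenSwapFun_involutive (e := e) hAB).toPerm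
  continuous_toFun := continuous_clopenSwapFun (e := e) hA hB hAB
  continuous_invFun := continuous_clopenSwapFun (e := e) hA hB hAB

section clopenSwap

variable {hA : IsClopen A} {hB : IsClopen B} {hAB : Disjoint A B} {e : A ≃ₜ B} {x : X}

theorem mapsTo_clopenSwap_left : MapsTo (clopenSwap hA hB hAB e) A B := fun x hx => by
  change clopenSwapFun e x ∈ B
  rw [clopenSwapFun_of_mem_left hx]
  exact (e _).2

theorem mapsTo_clopenSwap_right : MapsTo (clopenSwap hA hB hAB e) B A := fun x hx => by
  change clopenSwapFun e x ∈ A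
  rw [clopenSwapFun_of_mem_right hAB hx]
  exact (e.symm _).2

theorem clopenSwap_apply_of_notMem (hxA : x ∉ A) (hxB : x ∉ B) :
    clopenSwap hA hB hAB e x = x :=
  clopenSwapFun_of_notMem hxA hxB

theorem clopenSwap_apply_mem_iff {s : Set X} (hAs : A ⊆ s) (hBs : B ⊆ s) :
    clopenSwap hA hB hAB e x ∈ s ↔ x ∈ s := by
  by_cases hxA : x ∈ A
  · exact iff_of_true (hBs (mapsTo_clopenSwap_left hxA)) (hAs hxA)
  by_cases hxB : x ∈ B
  · exact iff_of_true (hAs (mapsTo_clopenSwap_right hxB)) (hBs hxB)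
  · rw [clopenSwap_apply_of_notMem hxA hxB]

end clopenSwap

theorem exists_apply_eq_self_and_eq_of_ne [T1Space X] (g : X ≃ₜ X) {a : X} (ha : IsOpen {a}) :
    ∃ h : X ≃ₜ X, h a = a ∧ ∀ x, x ≠ a → x ≠ g.symm a → h x = g x := by
  by_cases hga : g.symm a = a
  · exact ⟨g, (g.symm_apply_eq.1 hga).symm, fun _ _ _ => rfl⟩
  have hb : IsClopen {g.symm a} :=
    ⟨isClosed_singleton, by simpa using g.symm.isOpenMap _ ha⟩
  have hAB : Disjoint {g.symm a} {a} := disjoint_singleton.2 hga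
  let σ := clopenSwap hb ⟨isClosed_singleton, ha⟩ hAB (homeomorphOfUnique _ _)
  refine ⟨σ.trans g, ?_, fun x hxa hxb => ?_⟩
  · have : σ a = g.symm a := mem_singleton_iff.1 (mapsTo_clopenSwap_right (mem_singleton a))
    change g (σ a) = a
    rw [this, g.apply_symm_apply]
  · exact congrArg g (clopenSwap_apply_of_notMem hxb hxa)

end Homeomorph

namespace SuccOrder

variable {α : Type*} [LinearOrder α] [TopologicalSpace α] [OrderTopology α] [SuccOrder α]
  [NoMaxOrder α]

theorem isClopen_Iic (a : α) : IsClopen (Iic a) :=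
  ⟨isClosed_Iic, Order.Iio_succ a ▸ isOpen_Iio⟩

theorem isClopen_Icc_succ (a b : α) : IsClopen (Icc (Order.succ a) b) := by
  refine ⟨isClosed_Icc, ?_⟩
  rw [Set.Icc_succ_left_eq_Ioc, ← Set.Ioo_succ_right_eq_Ioc]
  exact isOpen_Ioo

end SuccOrder

universe u

namespace Ordinal

def addLeftIicOrderIso (a b : Ordinal) : Iic b ≃o Icc a (a + b) :=
  StrictMono.orderIsoOfSurjective (fun x => ⟨a + x, le_self_add, by gcongr; exact x.2⟩)
    (fun _ _ hxy => (add_lt_add_iff_left a).2 hxy) fun y =>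
      ⟨⟨y - a, Ordinal.sub_le.2 y.2.2⟩, Subtype.ext (Ordinal.add_sub_cancel_of_le y.2.1)⟩

theorem exists_homeomorph_omega0_lt_apply :
    ∃ σ : Ordinal.{u} ≃ₜ Ordinal.{u}, ω < σ ω ∧ ∀ x, x < ω₁ ↔ σ x < ω₁ := by
  have hAB : Disjoint (Iic ω) (Icc (Order.succ ω) (Order.succ ω + ω)) :=
    Set.disjoint_left.2 fun x hxA hxB => (Order.succ_le_iff.1 (hxB.1.trans hxA)).false
  let σ := Homeomorph.clopenSwap (SuccOrder.isClopen_Iic ω) (SuccOrder.isClopen_Icc_succ _ _)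
    hAB (addLeftIicOrderIso (Order.succ ω) ω).toHomeomorph
  have hσω : σ ω ∈ Icc (Order.succ ω) (Order.succ ω + ω) :=
    Homeomorph.mapsTo_clopenSwap_left self_mem_Iic
  have hsucc : Order.succ ω < ω₁ := (Cardinal.isSuccLimit_omega 1).succ_lt omega0_lt_omega_one
  have hB : Order.succ ω + ω < ω₁ := isPrincipal_add_omega 1 hsucc omega0_lt_omega_one
  refine ⟨σ, Order.succ_le_iff.1 hσω.1,
    fun x => (Homeomorph.clopenSwap_apply_mem_iff ?_ ?_).symm⟩
  · exact fun y hy => lt_of_le_of_lt hy omega0_lt_omega_one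
  · exact fun y hy => lt_of_le_of_lt hy.2 hB

end Ordinal

namespace Omega1

def homeomorphIio : Omega1 ≃ₜ Iio ω₁ :=
  OrderIso.toHomeomorph (α := Omega1) (β := Iio ω₁) (OrderIso.refl _)

theorem isOpenEmbedding_toOrdinal : IsOpenEmbedding Omega1.toOrdinal :=
  isOpen_Iio.isOpenEmbedding_subtypeVal.comp homeomorphIio.isOpenEmbedding

theorem isOpen_singleton_iff {x : Omega1} :
    IsOpen ({x} : Set Omega1) ↔ ¬ Order.IsSuccLimit x.toOrdinal := by
  rw [isOpenEmbedding_toOrdinal.isOpen_iff_image_isOpen, image_singleton,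
    SuccOrder.isOpen_singleton_iff]

theorem exists_homeomorph_apply_omegaElt_ne :
    ∃ g : Omega1 ≃ₜ Omega1, g omegaElt ≠ omegaElt := by
  obtain ⟨σ, hσω, hσ⟩ := Ordinal.exists_homeomorph_omega0_lt_apply
  refine ⟨homeomorphIio.trans ((σ.subtype hσ).trans homeomorphIio.symm), fun h => ?_⟩
  have : σ ω = ω := congrArg Omega1.toOrdinal h
  exact hσω.ne' this

theorem continuous_homeomorph_apply (x : Omega1) :
    Continuous fun g : Omega1 ≃ₜ Omega1 => g x :=
  (continuous_apply x).comp continuous_induced_dom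

theorem mem_closure_of_forall_finite_eqOn {S : Set (Omega1 ≃ₜ Omega1)} {g : Omega1 ≃ₜ Omega1}
    (h : ∀ I : Set Omega1, I.Finite → ∃ g' ∈ S, EqOn g' g I) : g ∈ closure S := by
  rw [mem_closure_iff_nhds]
  intro U hU
  rw [nhds_induced, Filter.mem_comap] at hU
  obtain ⟨V, hV, hVU⟩ := hU
  rw [nhds_pi, Filter.mem_pi] at hV
  obtain ⟨I, hI, t, ht, hIt⟩ := hV
  obtain ⟨g', hg'S, hg'⟩ := h I hI
  refine ⟨g', hVU (hIt fun x hx => ?_), hg'S⟩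
  change g' x ∈ t x
  exact (hg' hx) ▸ mem_of_mem_nhds (ht x)

end Omega1

theorem isOpen_singleton_natElt (k : ℕ) : IsOpen {natElt k} :=
  Omega1.isOpen_singleton_iff.2 fun h => (natCast_lt_of_isSuccLimit h k).false

theorem natElt_injective : Function.Injective natElt := fun _ _ h =>
  Nat.cast_injective (R := Ordinal) (congrArg Omega1.toOrdinal h)

theorem tendsto_natElt_omegaElt : Filter.Tendsto natElt Filter.atTop (𝓝 omegaElt) := by
  rw [Omega1.isOpenEmbedding_toOrdinal.isInducing.tendsto_nhds_iff]
  have := tendsto_atTop_ciSup (f := (Nat.cast : ℕ → Ordinal)) Nat.mono_cast bddAbove_of_small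
  rwa [iSup_natCast] at this

theorem isOpen_T (n : ℕ) : IsOpen (T n) :=
  isOpen_biUnion fun k _ =>
    (isOpen_singleton_natElt k).preimage (Omega1.continuous_homeomorph_apply _)

theorem dense_T (n : ℕ) : Dense (T n) := by
  refine fun g => Omega1.mem_closure_of_forall_finite_eqOn fun I hI => ?_
  have hfar : ∀ᶠ k in Filter.atTop, n ≤ k ∧ natElt k ∉ I ∧ g.symm (natElt k) ∉ I := by
    refine (Filter.eventually_ge_atTop n).and ?_
    rw [← Nat.cofinite_eq_atTop]
    exact (hI.preimage natElt_injective.injOn).eventually_cofinite_notMem.and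
      (hI.preimage (g.symm.injective.comp natElt_injective).injOn).eventually_cofinite_notMem
  obtain ⟨k, hkn, hkI, hgkI⟩ := hfar.exists
  obtain ⟨h, hfix, hgh⟩ := g.exists_apply_eq_self_and_eq_of_ne (isOpen_singleton_natElt k)
  exact ⟨h, mem_biUnion hkn hfix,
    fun x hx => hgh x (ne_of_mem_of_not_mem hx hkI) (ne_of_mem_of_not_mem hx hgkI)⟩

theorem isClosed_setOf_apply_omegaElt_eq :
    IsClosed {g : Omega1 ≃ₜ Omega1 | g omegaElt = omegaElt} :=
  isClosed_eq (Omega1.continuous_homeomorph_apply omegaElt) continuous_const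

theorem biInter_T_subset :
    (⋂ n ∈ {n : ℕ | 0 < n}, T n) ⊆ {g : Omega1 ≃ₜ Omega1 | g omegaElt = omegaElt} := by
  intro g hg
  have hfix : ∃ᶠ k in Filter.atTop, natElt k ∈ {x | g x = x} := by
    refine Filter.frequently_atTop.2 fun n => ?_
    obtain ⟨k, hk, hgk⟩ := mem_iUnion₂.1 (mem_iInter₂.1 hg (n + 1) n.succ_pos)
    exact ⟨k, (Nat.le_succ n).trans hk, hgk⟩
  exact (isClosed_eq g.continuous continuous_id).mem_of_frequently_of_tendsto hfix
    tendsto_natElt_omegaElt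

/-- `Homeo(ω₁)` is not a Baire space: the sets `T n` are dense open, but their
intersection is contained in the proper closed subgroup of homeomorphisms
fixing `ω`, hence is not dense. -/
theorem homeoOmega1_not_baire :
    (∀ n : ℕ, 0 < n → IsOpen (T n) ∧ Dense (T n)) ∧
    (⋂ n ∈ {n : ℕ | 0 < n}, T n) ⊆ {g : Omega1 ≃ₜ Omega1 | g omegaElt = omegaElt} ∧
    IsClosed {g : Omega1 ≃ₜ Omega1 | g omegaElt = omegaElt} ∧
    {g : Omega1 ≃ₜ Omega1 | g omegaElt = omegaElt} ≠ Set.univ ∧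
    ¬ Dense (⋂ n ∈ {n : ℕ | 0 < n}, T n) ∧
    ¬ BaireSpace (Omega1 ≃ₜ Omega1) := by
  have hproper : {g : Omega1 ≃ₜ Omega1 | g omegaElt = omegaElt} ≠ Set.univ :=
    (ne_univ_iff_exists_notMem _).2 Omega1.exists_homeomorph_apply_omegaElt_ne
  have hnotDense : ¬ Dense (⋂ n ∈ {n : ℕ | 0 < n}, T n) := fun hd =>
    hproper (univ_subset_iff.1 (hd.closure_eq ▸
      closure_minimal biInter_T_subset isClosed_setOf_apply_omegaElt_eq))
  refine ⟨fun n _ => ⟨isOpen_T n, dense_T n⟩, biInter_T_subset,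
    isClosed_setOf_apply_omegaElt_eq, hproper, hnotDense, fun _ => hnotDense ?_⟩
  exact dense_biInter_of_isOpen (fun n _ => isOpen_T n) (to_countable _) fun n _ => dense_T n
end
end

section
/- For every countable ordinal α > 0, every element x ≠ 0 of the α-th Cantor–Bendixson level ω₁^(α) \ ω₁^(α+1) of ω₁ can be written as x = x' + ω^α for some ordinal x' < x; conversely, ω^α lies in ω₁^(α) but not in ω₁^(α+1). -/
noncomputable section
open Ordinal Set Topology

/-- The set of limit (non-isolated) points of `A`, for the subspace topology on `A`. -/
def limitPoints {X : Type*} [TopologicalSpace X] (A : Set X) : Set X :=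
  {x | x ∈ A ∧ ∀ U : Set X, IsOpen U → x ∈ U → ∃ y, y ∈ U ∩ A ∧ y ≠ x}

/-- The `α`-th Cantor–Bendixson derived subset of a topological space `X`:
`X^(0) = X`, `X^(α+1)` is the set of limit points of `X^(α)`, and
`X^(λ) = ⋂_{β<λ} X^(β)` at limit stages. -/
def CBderiv (X : Type*) [TopologicalSpace X] (α : Ordinal) : Set X :=
  Ordinal.limitRecOn α Set.univ (fun _ ih => limitPoints ih)
    (fun o _ ih => ⋂ (β : Ordinal) (h : β < o), ih β h)

/-! Among the ordinals, a nonzero `x` lies in the `α`-th derived set iff `ω ^ α ∣ x`, while `0`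
lies only in the `0`-th one. This goes by induction on `α`: a nonzero ordinal is a limit of
multiples of `d` iff it is a multiple of `d * ω`, which handles successor stages, and an ordinal
divisible by `ω ^ β` for all `β < λ` is divisible by `ω ^ λ`. Since `ω₁` is an open subset of the
ordinals, it has the same derived sets. So a nonzero point of the `α`-th level is
`ω ^ α * (c + 1) = ω ^ α * c + ω ^ α`, as `ω ^ α * c` with `c` a limit is divisible by `ω ^ (α + 1)`. -/

open Filter

theorem limitPoints_eq_setOf_accPt {X : Type*} [TopologicalSpace X] (A : Set X) :
    limitPoints A = {x | x ∈ A ∧ AccPt x (𝓟 A)} := by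
  ext x
  rw [mem_ofPred_eq, accPt_iff_nhds, (nhds_basis_opens x).forall_iff
    fun U V hUV hU => hU.imp fun y hy => ⟨⟨hUV hy.1.1, hy.1.2⟩, hy.2⟩]
  exact and_congr_right fun _ => forall_congr' fun _ => by tauto

theorem CBderiv_zero (X : Type*) [TopologicalSpace X] : CBderiv X 0 = Set.univ := by
  rw [CBderiv, limitRecOn_zero]

theorem CBderiv_add_one (X : Type*) [TopologicalSpace X] (α : Ordinal) :
    CBderiv X (α + 1) = limitPoints (CBderiv X α) := by
  rw [CBderiv, limitRecOn_add_one]; rfl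

theorem CBderiv_of_isSuccLimit (X : Type*) [TopologicalSpace X] {l : Ordinal}
    (hl : Order.IsSuccLimit l) : CBderiv X l = ⋂ β < l, CBderiv X β := by
  rw [CBderiv, limitRecOn_limit _ _ _ _ hl]; rfl

namespace Topology.IsOpenEmbedding

variable {X Y : Type*} [TopologicalSpace X] [TopologicalSpace Y] {f : X → Y}

theorem preimage_limitPoints (hf : IsOpenEmbedding f) (A : Set Y) :
    f ⁻¹' limitPoints A = limitPoints (f ⁻¹' A) := by
  ext x
  simp only [limitPoints_eq_setOf_accPt, mem_preimage, mem_ofPred_eq, ← comap_principal, hf.accPt_comap_iff]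

theorem preimage_CBderiv (hf : IsOpenEmbedding f) (α : Ordinal) :
    f ⁻¹' CBderiv Y α = CBderiv X α := by
  induction α using limitRecOn with
  | zero => rw [CBderiv_zero, CBderiv_zero, preimage_univ]
  | add_one α ih => rw [CBderiv_add_one, CBderiv_add_one, ← ih, hf.preimage_limitPoints]
  | limit l hl ih =>
    simp only [CBderiv_of_isSuccLimit _ hl, preimage_iInter]
    exact iInter₂_congr ih

end Topology.IsOpenEmbedding

namespace Ordinal

theorem mul_omega0_dvd_iff {d x : Ordinal} (hx : x ≠ 0) :
    d * ω ∣ x ↔ d ∣ x ∧ ∀ b < x, ∃ y, d ∣ y ∧ b < y ∧ y < x := by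
  constructor
  · rintro ⟨c, rfl⟩
    have hd : d ≠ 0 := by rintro rfl; simp at hx
    have hc : c ≠ 0 := by rintro rfl; simp at hx
    rw [mul_assoc] at hx ⊢
    refine ⟨dvd_mul_right _ _, fun b hb => ?_⟩
    obtain ⟨c', hc', hbc'⟩ :=
      (lt_mul_iff_of_isSuccLimit (isSuccLimit_mul_left isSuccLimit_omega0 hc.bot_lt)).1 hb
    exact ⟨d * c', dvd_mul_right _ _, hbc', (mul_lt_mul_iff_right₀ hd.bot_lt).2 hc'⟩
  · rintro ⟨⟨c, rfl⟩, hcofinal⟩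
    have hd : d ≠ 0 := by rintro rfl; simp at hx
    rcases zero_or_succ_or_isSuccLimit c with rfl | ⟨e, rfl⟩ | hlim
    · simp at hx
    · obtain ⟨_, ⟨f, rfl⟩, hef, hfe⟩ :=
        hcofinal (d * e) ((mul_lt_mul_iff_right₀ hd.bot_lt).2 (Order.lt_succ e))
      rw [mul_lt_mul_iff_right₀ hd.bot_lt] at hef hfe
      exact absurd hef (Order.lt_succ_iff.1 hfe).not_gt
    · exact mul_dvd_mul_left d (isSuccPrelimit_iff_omega0_dvd.1 hlim.isSuccPrelimit)

theorem opow_dvd_of_isSuccLimit {a l x : Ordinal} (ha : a ≠ 0) (hl : Order.IsSuccLimit l)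
    (h : ∀ b < l, a ^ b ∣ x) : a ^ l ∣ x := by
  have hal : a ^ l ≠ 0 := opow_ne_zero l ha
  rw [dvd_iff_mod_eq_zero]
  by_contra hr
  obtain ⟨b, hb, hrb⟩ := (lt_opow_of_isSuccLimit ha hl).1 (mod_lt x hal)
  have hdvd : a ^ b ∣ x % a ^ l := by
    refine (dvd_add_iff ((opow_dvd_opow a hb.le).mul_right (x / a ^ l))).1 ?_
    rw [div_add_mod]
    exact h b hb
  exact hrb.not_ge (le_of_dvd hr hdvd)

theorem exists_lt_eq_add_of_dvd_of_not_mul_omega0_dvd {d x : Ordinal} (hx : x ≠ 0)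
    (hd : d ∣ x) (hnd : ¬ d * ω ∣ x) : ∃ x' < x, x = x' + d := by
  obtain ⟨c, rfl⟩ := hd
  have hd : d ≠ 0 := by rintro rfl; simp at hx
  rcases zero_or_succ_or_isSuccLimit c with rfl | ⟨e, rfl⟩ | hlim
  · exact absurd (mul_zero d) hx
  · exact ⟨d * e, (mul_lt_mul_iff_right₀ hd.bot_lt).2 (Order.lt_succ e), mul_succ d e⟩
  · exact absurd (mul_dvd_mul_left d (isSuccPrelimit_iff_omega0_dvd.1 hlim.isSuccPrelimit)) hnd

theorem not_mul_omega0_dvd_self {d : Ordinal} (hd : d ≠ 0) : ¬ d * ω ∣ d := fun h =>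
  ((mul_lt_mul_iff_right₀ hd.bot_lt).2 one_lt_omega0).not_ge (by simpa using le_of_dvd hd h)

theorem mem_CBderiv_iff {α x : Ordinal} :
    x ∈ CBderiv Ordinal α ↔ (α = 0 ∨ x ≠ 0) ∧ ω ^ α ∣ x := by
  induction α using limitRecOn generalizing x with
  | zero => simp [CBderiv_zero]
  | add_one α ih =>
    rw [CBderiv_add_one, limitPoints_eq_setOf_accPt, mem_ofPred_eq, SuccOrder.accPt_principal,
      isMin_iff_eq_bot, bot_eq_zero, opow_add_one]
    constructor
    · rintro ⟨hx, hx0, hcofinal⟩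
      refine ⟨Or.inr hx0, (mul_omega0_dvd_iff hx0).2 ⟨(ih.1 hx).2, fun b hb => ?_⟩⟩
      obtain ⟨y, hy, hby, hyx⟩ := hcofinal b hb
      exact ⟨y, (ih.1 hy).2, hby, hyx⟩
    · rintro ⟨hx0, hdvd⟩
      replace hx0 : x ≠ 0 := hx0.resolve_left (pos_of_gt (lt_add_one α)).ne'
      obtain ⟨hx, hcofinal⟩ := (mul_omega0_dvd_iff hx0).1 hdvd
      refine ⟨ih.2 ⟨Or.inr hx0, hx⟩, hx0, fun b hb => ?_⟩
      obtain ⟨y, hy, hby, hyx⟩ := hcofinal b hb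
      exact ⟨y, ih.2 ⟨Or.inr (pos_of_gt hby).ne', hy⟩, hby, hyx⟩
  | limit l hl ih =>
    rw [CBderiv_of_isSuccLimit _ hl, mem_iInter₂]
    constructor
    · intro h
      have h1 := one_lt_of_isSuccLimit hl
      have hx0 : x ≠ 0 := ((ih 1 h1).1 (h 1 h1)).1.resolve_left one_ne_zero
      exact ⟨Or.inr hx0, opow_dvd_of_isSuccLimit omega0_ne_zero hl
        fun β hβ => ((ih β hβ).1 (h β hβ)).2⟩
    · rintro ⟨hx0, hdvd⟩ β hβ
      exact (ih β hβ).2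
        ⟨Or.inr (hx0.resolve_left hl.pos.ne'), (opow_dvd_opow ω hβ.le).trans hdvd⟩

end Ordinal

theorem Omega1.isOpenEmbedding_toOrdinal_s12 : IsOpenEmbedding Omega1.toOrdinal := by
  have hinduced :
      instTopologicalSpaceOmega1 = (inferInstance : TopologicalSpace (Iio (ω_ 1 : Ordinal))) :=
    OrderTopology.topology_eq_generate_intervals.trans
      (@OrderTopology.topology_eq_generate_intervals (Iio (ω_ 1 : Ordinal)) _ _
        orderTopology_of_ordConnected).symm
  rw [hinduced]
  exact isOpen_Iio.isOpenEmbedding_subtypeVal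

theorem Omega1.mem_CBderiv_iff {α : Ordinal} {x : Omega1} :
    x ∈ CBderiv Omega1 α ↔ (α = 0 ∨ x.toOrdinal ≠ 0) ∧ ω ^ α ∣ x.toOrdinal := by
  rw [← Omega1.isOpenEmbedding_toOrdinal_s12.preimage_CBderiv, mem_preimage, Ordinal.mem_CBderiv_iff]

theorem CBlevel_description_general (α : Ordinal) (hα : α < Ordinal.omega 1) :
    (∀ x : Omega1, x ∈ CBderiv Omega1 α \ CBderiv Omega1 (α + 1) →
      x.toOrdinal ≠ 0 →
      ∃ x' : Ordinal, x' < x.toOrdinal ∧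
        x.toOrdinal = x' + Ordinal.omega0 ^ α) ∧
    ∃ w : Omega1, w.toOrdinal = Ordinal.omega0 ^ α ∧
      w ∈ CBderiv Omega1 α ∧ w ∉ CBderiv Omega1 (α + 1) := by
  refine ⟨fun x hx hx0 => ?_, ?_⟩
  · simp only [Set.mem_sdiff, Omega1.mem_CBderiv_iff, opow_add_one] at hx
    exact exists_lt_eq_add_of_dvd_of_not_mul_omega0_dvd hx0 hx.1.2 fun h => hx.2 ⟨Or.inr hx0, h⟩
  · have hpos : ω ^ α ≠ 0 := opow_ne_zero α omega0_ne_zero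
    refine ⟨Omega1.mk _ (isPrincipal_opow_omega 1 omega0_lt_omega_one hα), rfl, ?_, ?_⟩
    · exact Omega1.mem_CBderiv_iff.2 ⟨Or.inr hpos, dvd_rfl⟩
    · rw [Omega1.mem_CBderiv_iff, opow_add_one]
      exact fun h => not_mul_omega0_dvd_self hpos h.2

/-- For a countable ordinal `α > 0`: every nonzero element of the `α`-th
Cantor–Bendixson level `ω₁^(α) \ ω₁^(α+1)` of `ω₁` is of the form `x' + ω^α`
with `x' < x`; conversely `ω^α` lies in `ω₁^(α)` but not in `ω₁^(α+1)`. -/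
theorem CBlevel_description (α : Ordinal) (h0 : 0 < α) (hα : α < Ordinal.omega 1) :
    (∀ x : Omega1, x ∈ CBderiv Omega1 α \ CBderiv Omega1 (α + 1) →
      x.toOrdinal ≠ 0 →
      ∃ x' : Ordinal, x' < x.toOrdinal ∧
        x.toOrdinal = x' + Ordinal.omega0 ^ α) ∧
    ∃ w : Omega1, w.toOrdinal = Ordinal.omega0 ^ α ∧
      w ∈ CBderiv Omega1 α ∧ w ∉ CBderiv Omega1 (α + 1) :=
  CBlevel_description_general α hα
end
end

section
/- For any set X, the symmetric group Sym(X), endowed with the topology of pointwise convergence, is a Baire space. -/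
/-!
Given dense open sets `U n` and a basic open set of permutations agreeing with `σ₀` on a finite
set `F₀`, choose recursively permutations `σ n` and finite sets `F n` such that all permutations
agreeing with `σ (n + 1)` on `F (n + 1)` lie in `U n`, while `σ (n + 1)` agrees with `σ n` on
`F n` and on `σ n⁻¹ (F n)`, and `F (n + 1)` contains `F n`, `σ n (F n)` and `σ n⁻¹ (F n)`.
Then `σ n` and `σ n⁻¹` are eventually constant at each point of `⋃ n, F n`; their limits, extended
by the identity, are mutually inverse, and the resulting permutation lies in every `U n`.
-/

open Set Filter Topology Function Equiv

section Gluing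

variable {X : Type*}

open Classical in
/-- When `f (n + 1)` agrees with `f n` on `F n` for all `n`, this is the eventual value of `f n`
on `⋃ n, F n`; off that union it is the identity. -/
noncomputable def eventualLimit (f : ℕ → X → X) (F : ℕ → Set X) (x : X) : X :=
  if h : ∃ n, x ∈ F n then f h.choose x else x

variable {f g : ℕ → X → X} {F : ℕ → Set X}

theorem eqOn_of_eqOn_succ (hF : Monotone F) (hf : ∀ n, EqOn (f (n + 1)) (f n) (F n))
    {m n : ℕ} (hmn : m ≤ n) : EqOn (f n) (f m) (F m) := by
  induction n, hmn using Nat.le_induction with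
  | base => exact eqOn_refl _ _
  | succ n hmn ih => exact ((hf n).mono (hF hmn)).trans ih

theorem eventualLimit_eq (hF : Monotone F) (hf : ∀ n, EqOn (f (n + 1)) (f n) (F n))
    {n : ℕ} {x : X} (hx : x ∈ F n) : eventualLimit f F x = f n x := by
  have h : ∃ n, x ∈ F n := ⟨n, hx⟩
  rw [eventualLimit, dif_pos h]
  obtain hle | hle := le_total h.choose n
  · exact (eqOn_of_eqOn_succ hF hf hle h.choose_spec).symm
  · exact eqOn_of_eqOn_succ hF hf hle hx

theorem eventualLimit_of_forall_notMem {x : X} (hx : ∀ n, x ∉ F n) :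
    eventualLimit f F x = x := by
  rw [eventualLimit, dif_neg (not_exists.2 hx)]

theorem leftInverse_eventualLimit (hF : Monotone F) (hinv : ∀ n, LeftInverse (g n) (f n))
    (hmaps : ∀ n, MapsTo (f n) (F n) (F (n + 1)))
    (hf : ∀ n, EqOn (f (n + 1)) (f n) (F n)) (hg : ∀ n, EqOn (g (n + 1)) (g n) (F n)) :
    LeftInverse (eventualLimit g F) (eventualLimit f F) := by
  intro x
  by_cases hx : ∃ n, x ∈ F n
  · obtain ⟨n, hx⟩ := hx
    rw [eventualLimit_eq hF hf hx, eventualLimit_eq hF hg (hmaps n hx), ← hf n hx, hinv]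
  · push Not at hx
    rw [eventualLimit_of_forall_notMem hx, eventualLimit_of_forall_notMem hx]

theorem Equiv.eqOn_symm_of_eqOn_image_symm {Y : Type*} {σ τ : X ≃ Y} {s : Set Y}
    (h : EqOn τ σ (σ.symm '' s)) : EqOn τ.symm σ.symm s := fun y hy => by
  rw [Equiv.symm_apply_eq, h (mem_image_of_mem _ hy), apply_symm_apply]

theorem Equiv.Perm.exists_eqOn_of_eqOn_succ (σ : ℕ → Perm X) (F : ℕ → Set X)
    (hF : ∀ n, F n ∪ σ n '' F n ∪ (σ n).symm '' F n ⊆ F (n + 1))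
    (hσ : ∀ n, EqOn (σ (n + 1)) (σ n) (F n ∪ (σ n).symm '' F n)) :
    ∃ τ : Perm X, ∀ n, EqOn τ (σ n) (F n) := by
  have hF_mono : Monotone F :=
    monotone_nat_of_le_succ fun n => (subset_union_left.trans subset_union_left).trans (hF n)
  have hmaps (n : ℕ) : MapsTo (σ n) (F n) (F (n + 1)) :=
    fun _ hx => hF n (Or.inl (Or.inr (mem_image_of_mem _ hx)))
  have hmaps_symm (n : ℕ) : MapsTo (σ n).symm (F n) (F (n + 1)) :=
    fun _ hx => hF n (Or.inr (mem_image_of_mem _ hx))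
  have heq (n : ℕ) : EqOn (σ (n + 1)) (σ n) (F n) := (hσ n).mono subset_union_left
  have heq_symm (n : ℕ) : EqOn (σ (n + 1)).symm (σ n).symm (F n) :=
    Equiv.eqOn_symm_of_eqOn_image_symm ((hσ n).mono subset_union_right)
  exact ⟨⟨eventualLimit (σ ·) F, eventualLimit (fun n => (σ n).symm) F,
    leftInverse_eventualLimit hF_mono (fun n => (σ n).left_inv) hmaps heq heq_symm,
    leftInverse_eventualLimit hF_mono (fun n => (σ n).right_inv) hmaps_symm heq_symm heq⟩,
    fun _ _ hx => eventualLimit_eq (f := (σ ·)) hF_mono heq hx⟩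

end Gluing

namespace Equiv.Perm

variable {X : Type*} [TopologicalSpace X] [DiscreteTopology X] [TopologicalSpace (Perm X)]

theorem nhds_hasBasis_eqOn (h : IsInducing ((⇑) : Perm X → X → X)) (σ : Perm X) :
    (𝓝 σ).HasBasis (fun _ : Finset X => True) (fun F => {τ : Perm X | EqOn τ σ F}) := by
  rw [h.nhds_eq_comap, nhds_pi]
  simp only [nhds_discrete]
  refine ((hasBasis_pi_pure _).comap _).to_hasBasis (fun I hI => ⟨hI.toFinset, trivial, ?_⟩)
    (fun F _ => ⟨F, F.finite_toSet, subset_rfl⟩)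
  intro τ hτ x hx
  exact hτ (hI.mem_toFinset.2 hx)

theorem exists_eqOn_and_setOf_eqOn_subset (h : IsInducing ((⇑) : Perm X → X → X))
    {U : Set (Perm X)} (hUo : IsOpen U) (hUd : Dense U) (σ : Perm X) (F : Finset X) :
    ∃ (σ' : Perm X) (F' : Finset X), EqOn σ' σ F ∧ F ⊆ F' ∧ {τ : Perm X | EqOn τ σ' F'} ⊆ U := by
  obtain ⟨σ', hσ'U, hσ'F⟩ := hUd.inter_nhds_nonempty ((nhds_hasBasis_eqOn h σ).mem_of_mem trivial)
  obtain ⟨F'', -, hsub⟩ := (nhds_hasBasis_eqOn h σ').mem_iff.1 (hUo.mem_nhds hσ'U)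
  classical
  exact ⟨σ', F'' ∪ F, hσ'F, Finset.subset_union_right,
    fun τ hτ => hsub (hτ.mono (by simp))⟩

theorem baireSpace_of_isInducing (h : IsInducing ((⇑) : Perm X → X → X)) :
    BaireSpace (Perm X) := by
  classical
  refine ⟨fun U hUo hUd σ₀ =>
    (mem_closure_iff_nhds_basis (nhds_hasBasis_eqOn h σ₀)).2 fun F₀ _ => ?_⟩
  let hull (p : Perm X × Finset X) : Finset X := p.2 ∪ p.2.image p.1 ∪ p.2.image p.1.symm
  have step (n : ℕ) (p : Perm X × Finset X) : ∃ q : Perm X × Finset X,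
      EqOn q.1 p.1 (hull p) ∧ hull p ⊆ q.2 ∧ {τ : Perm X | EqOn τ q.1 q.2} ⊆ U n :=
    let ⟨σ', F', hσ'⟩ := exists_eqOn_and_setOf_eqOn_subset h (hUo n) (hUd n) p.1 (hull p)
    ⟨(σ', F'), hσ'⟩
  choose next hnext using step
  let seq (n : ℕ) : Perm X × Finset X := Nat.rec (σ₀, F₀) next n
  obtain ⟨τ, hτ⟩ := exists_eqOn_of_eqOn_succ (fun n => (seq n).1) (fun n => (seq n).2)
    (fun n => by exact_mod_cast (hnext n (seq n)).2.1)
    (fun n => (hnext n (seq n)).1.mono <| by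
      push_cast [hull]
      exact union_subset_union_left _ subset_union_left)
  exact ⟨τ, mem_iInter.2 fun n => (hnext n (seq n)).2.2 (hτ (n + 1)), hτ 0⟩

end Equiv.Perm

/-- For any set `X`, the symmetric group `Sym(X)` with the topology of
pointwise convergence (for `X` discrete) is a Baire space. -/
theorem symmetricGroup_baireSpace (X : Type*) :
    letI : TopologicalSpace (Equiv.Perm X) :=
      TopologicalSpace.induced (fun σ : Equiv.Perm X => (σ : X → X))
        (@Pi.topologicalSpace X (fun _ => X) (fun _ => ⊥))
    BaireSpace (Equiv.Perm X) :=
  letI : TopologicalSpace X := ⊥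
  haveI : DiscreteTopology X := ⟨rfl⟩
  letI : TopologicalSpace (Equiv.Perm X) := .induced (⇑) Pi.topologicalSpace
  Equiv.Perm.baireSpace_of_isInducing ⟨rfl⟩
end
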